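/- Let (a, b, c) be an admissible triple of natural numbers and set s = (a+b+c)/2. Then, as integers, rootMult_i(QF_{s+1}) + rootMult_i(QF_{(a+b−c)/2}) + rootMult_i(QF_{(b+c−a)/2}) + rootMult_i(QF_{(c+a−b)/2}) − rootMult_i(QF_a) − rootMult_i(QF_b) − rootMult_i(QF_c) = ε − ρ, where rootMult_i denotes root multiplicity at X = Complex.I, ε = 1 if at least one of a, b, c is odd and ε = 0 otherwise, and ρ = 1 if (a,b,c) is red and ρ = 0 otherwise. (Equivalently: the order at q = i of the Kauffman bracket of the theta graph, Θ_{a,b,c} = (−1)^s · [s+1]! [(a+b−c)/2]! [(b+c−a)/2]! [(c+a−b)/2]! / ([a]![b]![c]!), equals ε − ρ; its value is ε minus the red indicator, i.e. it vanishes to order 1 when the triple contains odd entries and has a pole of order 1 when the triple is red and all entries are even.) -/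
import Mathlib


open Polynomial Finset

/-- The polynomial form `P_n(X) = ∑_{k=0}^{n-1} X^{2k}` of the quantum integer `[n]`. -/
noncomputable def quantumP (n : ℕ) : Polynomial ℂ :=
  ∑ k ∈ Finset.range n, Polynomial.X ^ (2 * k)

/-- The polynomial form `QF_n = ∏_{m=1}^n P_m` of the quantum factorial `[n]!`. -/
noncomputable def quantumQF (n : ℕ) : Polynomial ℂ :=
  ∏ m ∈ Finset.range n, quantumP (m + 1)

/-- A triple `(a, b, c)` of natural numbers is admissible if `a + b + c` is even and
`a, b, c` satisfy the triangle inequalities. -/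
def Admissible (a b c : ℕ) : Prop :=
  Even (a + b + c) ∧ a ≤ b + c ∧ b ≤ c + a ∧ c ≤ a + b

/-- An admissible triple `(a, b, c)` is red if at least two of the three integers
`(a+b−c)/2, (b+c−a)/2, (c+a−b)/2` are odd. -/
def RedTriple (a b c : ℕ) : Prop :=
  (Odd ((a + b - c) / 2) ∧ Odd ((b + c - a) / 2)) ∨
    (Odd ((b + c - a) / 2) ∧ Odd ((c + a - b) / 2)) ∨
    (Odd ((a + b - c) / 2) ∧ Odd ((c + a - b) / 2))

lemma quantumP_eval_I (n : ℕ) :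
    (quantumP n).eval Complex.I = if Even n then 0 else 1 := by
  rw [quantumP, Polynomial.eval_finset_sum]
  simp [pow_mul, Complex.I_sq, neg_one_geom_sum]

lemma quantumP_eval_one (n : ℕ) : (quantumP n).eval 1 = (n : ℂ) := by
  rw [quantumP, Polynomial.eval_finset_sum]
  simp

lemma quantumP_ne_zero {n : ℕ} (hn : n ≠ 0) : quantumP n ≠ 0 := by
  intro h
  have h1 := quantumP_eval_one n
  rw [h] at h1
  simp at h1
  exact hn (by exact_mod_cast h1.symm)

lemma quantumP_factor (m : ℕ) :
    quantumP (2 * m) = (X ^ 2 + 1) * ∑ j ∈ Finset.range m, X ^ (4 * j) := by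
  induction m with
  | zero => simp [quantumP]
  | succ m ih =>
      have h2 : 2 * (m + 1) = 2 * m + 1 + 1 := by ring
      have h1 : quantumP (2 * (m + 1))
          = quantumP (2 * m) + X ^ (2 * (2 * m)) + X ^ (2 * (2 * m + 1)) := by
        rw [h2]
        simp only [quantumP, Finset.sum_range_succ]
      rw [h1, ih, Finset.sum_range_succ]
      ring

lemma rootMult_X_sq_add_one :
    rootMultiplicity Complex.I ((X : Polynomial ℂ) ^ 2 + 1) = 1 := by
  have hC : (C Complex.I : Polynomial ℂ) ^ 2 = -1 := by
    rw [← C_pow, Complex.I_sq]; simp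
  have hfac : (X : Polynomial ℂ) ^ 2 + 1 = (X - C Complex.I) * (X - C (-Complex.I)) := by
    calc (X : Polynomial ℂ) ^ 2 + 1 = X ^ 2 - (C Complex.I) ^ 2 := by rw [hC]; ring
    _ = (X - C Complex.I) * (X - C (-Complex.I)) := by simp only [map_neg, sub_neg_eq_add]; ring
  rw [hfac, rootMultiplicity_mul (by
    exact mul_ne_zero (X_sub_C_ne_zero Complex.I) (X_sub_C_ne_zero (-Complex.I)))]
  rw [rootMultiplicity_X_sub_C_self, rootMultiplicity_X_sub_C]
  simp [Complex.I_ne_zero]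
  intro h
  exact Complex.I_ne_zero (by linear_combination h/2 : Complex.I = 0)

lemma rootMult_P_even {m : ℕ} (hm : m ≠ 0) :
    rootMultiplicity Complex.I (quantumP (2 * m)) = 1 := by
  rw [quantumP_factor]
  have hQ : (∑ j ∈ Finset.range m, (X : Polynomial ℂ) ^ (4 * j)).eval Complex.I = (m : ℂ) := by
    simp [eval_finset_sum, pow_mul, Complex.I_pow_four]
  have hQroot : ¬ IsRoot (∑ j ∈ Finset.range m, (X : Polynomial ℂ) ^ (4 * j)) Complex.I := by
    rw [IsRoot, hQ]
    exact_mod_cast hm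
  have hQne : (∑ j ∈ Finset.range m, (X : Polynomial ℂ) ^ (4 * j)) ≠ 0 := by
    intro h; rw [h] at hQroot; simp [IsRoot] at hQroot
  rw [rootMultiplicity_mul (mul_ne_zero (by
    intro h
    have := rootMult_X_sq_add_one
    rw [h] at this; simp at this) hQne)]
  rw [rootMult_X_sq_add_one, rootMultiplicity_eq_zero hQroot]

lemma rootMult_P (n : ℕ) (hn : n ≠ 0) :
    rootMultiplicity Complex.I (quantumP n) = if Even n then 1 else 0 := by
  rcases Nat.even_or_odd n with he | ho
  · rw [if_pos he]
    obtain ⟨m, hm⟩ := he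
    have : n = 2 * m := by omega
    rw [this, rootMult_P_even (by omega)]
  · rw [if_neg (Nat.not_even_iff_odd.mpr ho)]
    apply rootMultiplicity_eq_zero
    rw [IsRoot, quantumP_eval_I, if_neg (Nat.not_even_iff_odd.mpr ho)]
    norm_num

lemma quantumQF_ne_zero (n : ℕ) : quantumQF n ≠ 0 := by
  apply Finset.prod_ne_zero_iff.mpr
  intro m _
  exact quantumP_ne_zero (Nat.succ_ne_zero m)

lemma rootMult_QF (n : ℕ) :
    rootMultiplicity Complex.I (quantumQF n) = n / 2 := by
  induction n with
  | zero => simp [quantumQF]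
  | succ n ih =>
      have hsucc : quantumQF (n + 1) = quantumQF n * quantumP (n + 1) := by
        rw [quantumQF, Finset.prod_range_succ]; rfl
      rw [hsucc, rootMultiplicity_mul (mul_ne_zero (quantumQF_ne_zero n)
        (quantumP_ne_zero (Nat.succ_ne_zero n))), ih,
        rootMult_P (n + 1) (Nat.succ_ne_zero n)]
      rcases Nat.even_or_odd (n + 1) with he | ho
      · rw [if_pos he]
        rw [Nat.even_iff] at he
        omega
      · rw [if_neg (Nat.not_even_iff_odd.mpr ho)]
        rw [Nat.odd_iff] at ho
        omega


set_option maxHeartbeats 1000000 in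
open scoped Classical in
/-- The order at `q = i` of the Kauffman bracket of the theta graph `Θ_{a,b,c}` equals
`ε − ρ`, where `ε = 1` iff at least one of `a, b, c` is odd and `ρ = 1` iff the triple
is red. -/
theorem ord_I_theta (a b c : ℕ) (h : Admissible a b c) :
    (Polynomial.rootMultiplicity Complex.I (quantumQF ((a + b + c) / 2 + 1)) : ℤ) +
      (Polynomial.rootMultiplicity Complex.I (quantumQF ((a + b - c) / 2)) : ℤ) +
      (Polynomial.rootMultiplicity Complex.I (quantumQF ((b + c - a) / 2)) : ℤ) +
      (Polynomial.rootMultiplicity Complex.I (quantumQF ((c + a - b) / 2)) : ℤ) -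
      (Polynomial.rootMultiplicity Complex.I (quantumQF a) : ℤ) -
      (Polynomial.rootMultiplicity Complex.I (quantumQF b) : ℤ) -
      (Polynomial.rootMultiplicity Complex.I (quantumQF c) : ℤ) =
    (if Odd a ∨ Odd b ∨ Odd c then 1 else 0) -
      (if RedTriple a b c then 1 else 0) := by
  obtain ⟨heven, h1, h2, h3⟩ := h
  rw [Nat.even_iff] at heven
  obtain ⟨x, hx⟩ : ∃ x, a + b - c = 2 * x := ⟨(a + b - c) / 2, by omega⟩
  obtain ⟨y, hy⟩ : ∃ y, b + c - a = 2 * y := ⟨(b + c - a) / 2, by omega⟩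
  obtain ⟨z, hz⟩ : ∃ z, c + a - b = 2 * z := ⟨(c + a - b) / 2, by omega⟩
  have ea : a = x + z := by omega
  have eb : b = x + y := by omega
  have ec : c = y + z := by omega
  have e1 : (a + b - c) / 2 = x := by omega
  have e2 : (b + c - a) / 2 = y := by omega
  have e3 : (c + a - b) / 2 = z := by omega
  have e4 : (a + b + c) / 2 = x + y + z := by omega
  simp only [RedTriple, Nat.odd_iff, rootMult_QF, e1, e2, e3, e4]
  subst ea eb ec
  clear heven h1 h2 h3 hx hy hz e1 e2 e3 e4
  have px : x % 2 = 0 ∨ x % 2 = 1 := by omega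
  have py : y % 2 = 0 ∨ y % 2 = 1 := by omega
  have pz : z % 2 = 0 ∨ z % 2 = 1 := by omega
  rcases px with px | px <;> rcases py with py | py <;> rcases pz with pz | pz <;>
    split_ifs <;> omega
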